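/- Let f : [a,b] → ℝⁿ be continuous, differentiable except at finitely many points, with derivative (where defined) taking values in a closed linear subspace S ⊆ ℝⁿ, and f(a) ∈ S. Then f(t) ∈ S for all t ∈ [a,b]. -/

import Mathlib

open Set

/-- A continuous function on `[a,b]` with zero derivative on all of the open
interval is constant on `[a,b]`. -/
lemma const_of_deriv_zero_interior {F : Type*} [NormedAddCommGroup F] [NormedSpace ℝ F]
    {a b : ℝ} (hab : a ≤ b) {g : ℝ → F} (hg : ContinuousOn g (Icc a b))
    (hg' : ∀ t ∈ Ioo a b, HasDerivWithinAt g 0 (Icc a b) t) :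
    ∀ t ∈ Icc a b, g t = g a := by
  rcases eq_or_lt_of_le hab with rfl | hlt
  · intro t ht
    have : t = a := le_antisymm ht.2 ht.1
    rw [this]
  have hconst : ∀ x ∈ Ioo a b, ∀ y ∈ Ioo a b, g x = g y := by
    intro x hx y hy
    have hdiff : DifferentiableOn ℝ g (Ioo a b) := fun t ht =>
      ((hg' t ht).mono Ioo_subset_Icc_self).differentiableWithinAt
    apply Convex.is_const_of_fderivWithin_eq_zero (convex_Ioo a b) hdiff _ hx hy
    intro t ht
    have h1 : HasFDerivWithinAt g (0 : ℝ →L[ℝ] F) (Ioo a b) t := by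
      have h := ((hg' t ht).mono Ioo_subset_Icc_self).hasFDerivWithinAt
      convert h using 1
      ext
      simp
      ext
      simp
    exact h1.fderivWithin (isOpen_Ioo.uniqueDiffWithinAt ht)
  set m := (a + b) / 2 with hm
  have hmem : m ∈ Ioo a b := ⟨by linarith, by linarith⟩
  have hnebot : (nhdsWithin a (Ioo a b)).NeBot := by
    rw [← mem_closure_iff_nhdsWithin_neBot, closure_Ioo hlt.ne]
    exact ⟨le_rfl, hab⟩
  have hnebotb : (nhdsWithin b (Ioo a b)).NeBot := by
    rw [← mem_closure_iff_nhdsWithin_neBot, closure_Ioo hlt.ne]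
    exact ⟨hab, le_rfl⟩
  have key : ∀ t ∈ Icc a b, g t = g m := by
    intro t ht
    rcases eq_or_lt_of_le ht.1 with heq | hat
    · -- t = a
      subst heq
      haveI := hnebot
      have h1 : Filter.Tendsto g (nhdsWithin a (Ioo a b)) (nhds (g a)) :=
        ((hg a ht).mono Ioo_subset_Icc_self).tendsto
      have h2 : Filter.Tendsto g (nhdsWithin a (Ioo a b)) (nhds (g m)) := by
        apply Filter.Tendsto.congr' _ tendsto_const_nhds
        filter_upwards [self_mem_nhdsWithin] with x hx
        exact (hconst x hx m hmem).symm
      exact tendsto_nhds_unique h1 h2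
    rcases eq_or_lt_of_le ht.2 with heq | htb
    · -- t = b
      subst heq
      haveI := hnebotb
      have h1 : Filter.Tendsto g (nhdsWithin t (Ioo a t)) (nhds (g t)) :=
        ((hg t ht).mono Ioo_subset_Icc_self).tendsto
      have h2 : Filter.Tendsto g (nhdsWithin t (Ioo a t)) (nhds (g m)) := by
        apply Filter.Tendsto.congr' _ tendsto_const_nhds
        filter_upwards [self_mem_nhdsWithin] with x hx
        exact (hconst x hx m hmem).symm
      exact tendsto_nhds_unique h1 h2
    · exact hconst t ⟨hat, htb⟩ m hmem
  intro t ht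
  rw [key t ht, key a (left_mem_Icc.2 hab)]

/-- A continuous function on `[a,b]` with zero derivative outside a finite set
is constant on `[a,b]`. -/
lemma const_of_deriv_zero_finite_exc {F : Type*} [NormedAddCommGroup F] [NormedSpace ℝ F]
    (E : Set ℝ) (hE : E.Finite) :
    ∀ N : ℕ, ∀ a b : ℝ, a ≤ b → (E ∩ Ioo a b).ncard ≤ N →
      ∀ g : ℝ → F, ContinuousOn g (Icc a b) →
      (∀ t ∈ Icc a b \ E, HasDerivWithinAt g 0 (Icc a b) t) →
      ∀ t ∈ Icc a b, g t = g a := by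
  intro N
  induction N with
  | zero =>
    intro a b hab hcard g hg hg'
    have hempty : E ∩ Ioo a b = ∅ := by
      rw [← Set.ncard_eq_zero (hE.inter_of_left _)]
      omega
    apply const_of_deriv_zero_interior hab hg
    intro t ht
    apply hg' t ⟨Ioo_subset_Icc_self ht, ?_⟩
    intro htE
    exact absurd (Set.eq_empty_iff_forall_notMem.1 hempty t ⟨htE, ht⟩) (fun h => h)
  | succ N ih =>
    intro a b hab hcard g hg hg'
    rcases Set.eq_empty_or_nonempty (E ∩ Ioo a b) with hempty | ⟨c, hcE, hcI⟩
    · apply const_of_deriv_zero_interior hab hg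
      intro t ht
      apply hg' t ⟨Ioo_subset_Icc_self ht, ?_⟩
      intro htE
      exact absurd (Set.eq_empty_iff_forall_notMem.1 hempty t ⟨htE, ht⟩) (fun h => h)
    · -- split at c
      have hIac : Icc a c ⊆ Icc a b := Icc_subset_Icc le_rfl hcI.2.le
      have hIcb : Icc c b ⊆ Icc a b := Icc_subset_Icc hcI.1.le le_rfl
      have hcard1 : (E ∩ Ioo a c).ncard ≤ N := by
        have hss : E ∩ Ioo a c ⊂ E ∩ Ioo a b := by
          constructor
          · exact Set.inter_subset_inter_right _ (Ioo_subset_Ioo le_rfl hcI.2.le)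
          · intro hsub
            have := hsub ⟨hcE, hcI⟩
            exact absurd this.2.2 (lt_irrefl c)
        have := Set.ncard_lt_ncard hss (hE.inter_of_left _)
        omega
      have hcard2 : (E ∩ Ioo c b).ncard ≤ N := by
        have hss : E ∩ Ioo c b ⊂ E ∩ Ioo a b := by
          constructor
          · exact Set.inter_subset_inter_right _ (Ioo_subset_Ioo hcI.1.le le_rfl)
          · intro hsub
            have := hsub ⟨hcE, hcI⟩
            exact absurd this.2.1 (lt_irrefl c)
        have := Set.ncard_lt_ncard hss (hE.inter_of_left _)
        omega
      have h1 : ∀ t ∈ Icc a c, g t = g a := by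
        apply ih a c hcI.1.le hcard1 g (hg.mono hIac)
        intro t ht
        exact (hg' t ⟨hIac ht.1, ht.2⟩).mono hIac
      have h2 : ∀ t ∈ Icc c b, g t = g c := by
        apply ih c b hcI.2.le hcard2 g (hg.mono hIcb)
        intro t ht
        exact (hg' t ⟨hIcb ht.1, ht.2⟩).mono hIcb
      intro t ht
      rcases le_total t c with htc | hct
      · exact h1 t ⟨ht.1, htc⟩
      · rw [h2 t ⟨hct, ht.2⟩, h1 c ⟨hcI.1.le, le_rfl⟩]

/-- A continuous, piecewise differentiable path starting in a closed linear subspace,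
whose derivative lies in the subspace wherever it exists, stays in the subspace. -/
theorem path_stays_in_subspace
    {n : ℕ} (a b : ℝ) (hab : a ≤ b)
    (f : ℝ → EuclideanSpace ℝ (Fin n))
    (S : Submodule ℝ (EuclideanSpace ℝ (Fin n))) (hS : IsClosed (S : Set (EuclideanSpace ℝ (Fin n))))
    (E : Set ℝ) (hE : E.Finite)
    (hf : ContinuousOn f (Icc a b))
    (hf' : ∀ t ∈ Icc a b \ E, ∃ d ∈ S, HasDerivWithinAt f d (Icc a b) t)
    (ha : f a ∈ S) :
    ∀ t ∈ Icc a b, f t ∈ S := by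
  -- project onto the orthogonal complement
  set P : EuclideanSpace ℝ (Fin n) →L[ℝ] Sᗮ :=
    (Submodule.orthogonalProjectionOnto Sᗮ : EuclideanSpace ℝ (Fin n) →L[ℝ] Sᗮ) with hP
  have hker : ∀ v : EuclideanSpace ℝ (Fin n), P v = 0 ↔ v ∈ S := by
    intro v
    rw [hP, Submodule.orthogonalProjectionOnto_eq_zero_iff, Submodule.orthogonal_orthogonal]
  set g : ℝ → Sᗮ := fun t => P (f t) with hg
  have hgcont : ContinuousOn g (Icc a b) := P.continuous.comp_continuousOn hf
  have hgderiv : ∀ t ∈ Icc a b \ E, HasDerivWithinAt g 0 (Icc a b) t := by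
    intro t ht
    obtain ⟨d, hdS, hder⟩ := hf' t ht
    have := P.hasFDerivAt.comp_hasDerivWithinAt t hder
    rwa [(hker d).2 hdS] at this
  have hgconst := const_of_deriv_zero_finite_exc E hE (E ∩ Ioo a b).ncard a b hab le_rfl
    g hgcont hgderiv
  intro t ht
  have hga : g a = 0 := (hker (f a)).2 ha
  have h0 : g t = 0 := by rw [hgconst t ht, hga]
  exact (hker (f t)).1 h0
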